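/- Let (X,U,V) : ℝ → ℝ³ be a differentiable solution of X' = sin(X)U − cos(X)V, U' = cos X, V' = sin X. If X'(0) > 0 then X'(t) > 0 for all t ∈ ℝ, and if X'(0) < 0 then X'(t) < 0 for all t ∈ ℝ. In other words, the sign of sin(X(t))U(t) − cos(X(t))V(t) is constant along any trajectory on which it does not vanish at time 0. -/

import Mathlib

open Real

/-!
Write `W = sin(X)U − cos(X)V`, so that `X' = W`. Differentiating, the terms `sin X cos X`
coming from `U'` and `V'` cancel, and `W` solves the scalar linear equation
`W' = W g` with continuous coefficient `g = cos(X)U + sin(X)V`. Hence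
`W t = W 0 · exp (∫₀ᵗ g)`, and the exponential factor is positive.
-/

theorem hasDerivAt_sin_mul_sub_cos_mul {X U V : ℝ → ℝ} {a t : ℝ} (hX : HasDerivAt X a t)
    (hU : HasDerivAt U (cos (X t)) t) (hV : HasDerivAt V (sin (X t)) t) :
    HasDerivAt (fun s => sin (X s) * U s - cos (X s) * V s)
      (a * (cos (X t) * U t + sin (X t) * V t)) t :=
  ((hX.sin.mul hU).sub (hX.cos.mul hV)).congr_deriv (by ring)

theorem eq_mul_exp_integral_of_hasDerivAt_mul {f g : ℝ → ℝ} (hg : Continuous g)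
    (hf : ∀ t, HasDerivAt f (f t * g t) t) (a t : ℝ) :
    f t = f a * exp (∫ s in a..t, g s) := by
  set G : ℝ → ℝ := fun t => ∫ s in a..t, g s
  have hG : ∀ t, HasDerivAt G (g t) t := fun t => (hg.integral_hasStrictDerivAt a t).hasDerivAt
  have hconst : ∀ t, HasDerivAt (fun s => f s * exp (-G s)) 0 t := fun t =>
    ((hf t).mul (hG t).neg.exp).congr_deriv (by ring)
  have h := is_const_of_deriv_eq_zero (fun s => (hconst s).differentiableAt)
    (fun s => (hconst s).deriv) t a
  have hGa : G a = 0 := intervalIntegral.integral_same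
  simp only [hGa, neg_zero, exp_zero, mul_one] at h
  rw [← h, mul_assoc, ← exp_add, neg_add_cancel, exp_zero, mul_one]

/-- along any solution of
`X' = sin(X)U − cos(X)V, U' = cos X, V' = sin X`, the sign of
`X'(t) = sin(X(t))U(t) − cos(X(t))V(t)` is constant provided it does not
vanish at time `0`. -/
theorem stmt_2 (X U V : ℝ → ℝ)
    (hX : ∀ t : ℝ, HasDerivAt X (Real.sin (X t) * U t - Real.cos (X t) * V t) t)
    (hU : ∀ t : ℝ, HasDerivAt U (Real.cos (X t)) t)
    (hV : ∀ t : ℝ, HasDerivAt V (Real.sin (X t)) t) :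
    (0 < Real.sin (X 0) * U 0 - Real.cos (X 0) * V 0 →
      ∀ t : ℝ, 0 < Real.sin (X t) * U t - Real.cos (X t) * V t) ∧
    (Real.sin (X 0) * U 0 - Real.cos (X 0) * V 0 < 0 →
      ∀ t : ℝ, Real.sin (X t) * U t - Real.cos (X t) * V t < 0) := by
  set W : ℝ → ℝ := fun t => sin (X t) * U t - cos (X t) * V t
  have hXc : Continuous X := continuous_iff_continuousAt.2 fun t => (hX t).continuousAt
  have hUc : Continuous U := continuous_iff_continuousAt.2 fun t => (hU t).continuousAt
  have hVc : Continuous V := continuous_iff_continuousAt.2 fun t => (hV t).continuousAt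
  have hW (t : ℝ) : W t = W 0 * exp (∫ s in (0 : ℝ)..t, cos (X s) * U s + sin (X s) * V s) :=
    eq_mul_exp_integral_of_hasDerivAt_mul (by fun_prop)
      (fun t => hasDerivAt_sin_mul_sub_cos_mul (hX t) (hU t) (hV t)) 0 t
  refine ⟨fun hpos t => ?_, fun hneg t => ?_⟩
  · change 0 < W t
    exact hW t ▸ mul_pos hpos (exp_pos _)
  · change W t < 0
    exact hW t ▸ mul_neg_of_neg_of_pos hneg (exp_pos _)
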